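/- In any algebra (S,*,') satisfying the three axioms, the identity (x * y') * y = x * (y' * y) holds for all x, y in S. -/

import Mathlib

section

variable {S : Type*} {m : S → S → S} {i : S → S}

theorem mul_inv_mul_inv_inv_eq_self (E1 : ∀ x, m (m x (i x)) x = x)
    (E3 : ∀ x y z, m (m x y) z = m x (m y (i (i z)))) (x : S) :
    m x (m (i x) (i (i x))) = x :=
  (E3 x (i x) x).symm.trans (E1 x)

/-- Expand `x''` by (E1) and reassociate by (E3); the factor `x' (x'' x''')` then collapses
to `x'` by the previous lemma. -/
theorem inv_mul_inv_inv_eq_inv_mul (E1 : ∀ x, m (m x (i x)) x = x)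
    (E3 : ∀ x y z, m (m x y) z = m x (m y (i (i z)))) (x : S) :
    m (i x) (i (i x)) = m (i x) x :=
  calc m (i x) (i (i x))
      = m (i x) (m (m (i (i x)) (i (i (i x)))) (i (i x))) := by rw [E1]
    _ = m (m (i x) (m (i (i x)) (i (i (i x))))) x := (E3 _ _ _).symm
    _ = m (i x) x := by rw [mul_inv_mul_inv_inv_eq_self E1 E3]

end

theorem stmt_general (S : Type*) (m : S → S → S) (i : S → S)
    (E1 : ∀ x, m (m x (i x)) x = x)
    (E3 : ∀ x y z, m (m x y) z = m x (m y (i (i z)))) :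
    ∀ x y, m (m x (i y)) y = m x (m (i y) y) := by
  intro x y
  rw [E3 x (i y) y, inv_mul_inv_inv_eq_inv_mul E1 E3 y]

theorem stmt (S : Type*) (m : S → S → S) (i : S → S)
    (E1 : ∀ x, m (m x (i x)) x = x)
    (E2 : ∀ x y, m (m x (i x)) (m (i y) y) = m (m (i y) y) (m x (i x)))
    (E3 : ∀ x y z, m (m x y) z = m x (m y (i (i z)))) :
    ∀ x y, m (m x (i y)) y = m x (m (i y) y) :=
  stmt_general S m i E1 E3
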